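/- Let V be a finite set, let Λ_p be the ℂ-vector space with basis the sequences of p+1 elements of V (elementary p-paths), and define ∂ : Λ_p → Λ_{p-1} on basis elements by ∂(e_{i_0⋯i_p}) = Σ_{j=0}^{p} ξ^j e_{i_0⋯î_j⋯i_p}, where ξ is a primitive N-th root of unity and î_j denotes omission of the j-th vertex. Then the N-fold composition ∂^N is the zero map, i.e., (Λ_*, ∂) is an N-chain complex. -/
import Mathlib


open scoped BigOperators

/-- `Lam V p` is the free ℂ-vector space on sequences of `p` elements of `V`
(so elementary `n`-paths, which have `n+1` vertices, live in `Lam V (n+1)`). -/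
abbrev Lam (V : Type) (p : ℕ) := (Fin p → V) →₀ ℂ

/-- The Mayer boundary `∂(e_{i_0⋯i_p}) = Σ_{j=0}^{p} ξ^j e_{i_0⋯î_j⋯i_p}`,
as a linear map from paths with `p+1` vertices to paths with `p` vertices. -/
noncomputable def pbdry (V : Type) (ξ : ℂ) (p : ℕ) : Lam V (p + 1) →ₗ[ℂ] Lam V p :=
  Finsupp.lsum ℂ fun f =>
    ∑ j : Fin (p + 1), (ξ ^ (j : ℕ)) • Finsupp.lsingle (f ∘ j.succAbove)

/-- The Mayer boundary in all degrees (zero on the degenerate bottom degree). -/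
noncomputable def pbdry' (V : Type) (ξ : ℂ) : ∀ p, Lam V p →ₗ[ℂ] Lam V (p - 1)
  | 0 => 0
  | p + 1 => pbdry V ξ p

/-- The `r`-fold iterate `∂^r : Λ_p → Λ_{p-r}`. -/
noncomputable def pbdryIter (V : Type) (ξ : ℂ) :
    (r : ℕ) → (p : ℕ) → Lam V p →ₗ[ℂ] Lam V (p - r)
  | 0, _ => LinearMap.id
  | r + 1, p => (pbdry' V ξ (p - r)).comp (pbdryIter V ξ r p)

noncomputable def consMap (V : Type) (v : V) (p : ℕ) : Lam V p →ₗ[ℂ] Lam V (p + 1) :=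
  Finsupp.lmapDomain ℂ ℂ (fun g => Fin.cons v g)

noncomputable def lamCast (V : Type) {a b : ℕ} (h : a = b) : Lam V a ≃ₗ[ℂ] Lam V b :=
  Finsupp.domLCongr (Equiv.arrowCongr (finCongr h) (Equiv.refl V))

lemma lamCast_rfl (V : Type) {a : ℕ} (h : a = a) :
    lamCast V h = LinearEquiv.refl ℂ (Lam V a) := by
  simp [lamCast, finCongr_refl, Equiv.arrowCongr_refl, Finsupp.domLCongr_refl]

lemma lamCast_trans (V : Type) {a b c : ℕ} (h₁ : a = b) (h₂ : b = c) :
    (lamCast V h₂).toLinearMap.comp (lamCast V h₁).toLinearMap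
      = (lamCast V (h₁.trans h₂)).toLinearMap := by
  subst h₁; subst h₂; simp [lamCast_rfl]

lemma pbdry_cast (V : Type) (ξ : ℂ) {a b : ℕ} (h : a = b) :
    (pbdry V ξ b).comp (lamCast V (show a + 1 = b + 1 by rw [h])).toLinearMap
      = (lamCast V h).toLinearMap.comp (pbdry V ξ a) := by
  subst h; simp [lamCast_rfl]

lemma pbdry'_cast (V : Type) (ξ : ℂ) {a b : ℕ} (h : a = b) :
    (pbdry' V ξ b).comp (lamCast V h).toLinearMap
      = (lamCast V (show a - 1 = b - 1 by rw [h])).toLinearMap.comp (pbdry' V ξ a) := by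
  subst h; simp [lamCast_rfl]

lemma pbdryIter_cast (V : Type) (ξ : ℂ) (r : ℕ) {a b : ℕ} (h : a = b) :
    pbdryIter V ξ r a
      = (lamCast V (show b - r = a - r by rw [h])).toLinearMap.comp
        ((pbdryIter V ξ r b).comp (lamCast V h).toLinearMap) := by
  subst h; simp [lamCast_rfl]

lemma pbdry_single (V : Type) (ξ : ℂ) (p : ℕ) (f : Fin (p+1) → V) (c : ℂ) :
    pbdry V ξ p (Finsupp.single f c)
      = ∑ j : Fin (p + 1), (ξ ^ (j : ℕ)) • Finsupp.single (f ∘ j.succAbove) c := by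
  simp [pbdry, Finsupp.lsum_single]

lemma consMap_single (V : Type) (v : V) (p : ℕ) (g : Fin p → V) (c : ℂ) :
    consMap V v p (Finsupp.single g c) = Finsupp.single (Fin.cons v g) c := by
  simp [consMap, Finsupp.lmapDomain_apply, Finsupp.mapDomain_single]

lemma cons_comp_succAbove_succ (V : Type) (v : V) {q : ℕ} (f : Fin (q+1) → V) (i : Fin (q+1)) :
    (Fin.cons v f : Fin (q+2) → V) ∘ (Fin.succAbove i.succ) = Fin.cons v (f ∘ i.succAbove) := by
  funext j
  induction j using Fin.cases with
  | zero => simp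
  | succ k => simp [Fin.succ_succAbove_succ]

lemma step0 (V : Type) (ξ : ℂ) (v : V) :
    (pbdry V ξ 0).comp (consMap V v 0) = LinearMap.id := by
  apply Finsupp.lhom_ext
  intro f c
  have hf : (Fin.cons v f : Fin 1 → V) ∘ (Fin.succAbove (0 : Fin 1)) = f := by
    funext j; exact j.elim0
  simp [consMap_single, pbdry_single, hf]

lemma step (V : Type) (ξ : ℂ) (q : ℕ) (v : V) :
    (pbdry V ξ (q+1)).comp (consMap V v (q+1)) =
      LinearMap.id + ξ • (consMap V v q).comp (pbdry V ξ q) := by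
  apply Finsupp.lhom_ext
  intro f c
  have h0 : (Fin.cons v f : Fin (q+2) → V) ∘ (Fin.succAbove (0 : Fin (q+2))) = f := by
    funext j; simp
  simp only [LinearMap.comp_apply, consMap_single, pbdry_single, LinearMap.add_apply,
    LinearMap.id_apply, LinearMap.smul_apply]
  rw [Fin.sum_univ_succ]
  simp only [h0, Fin.val_zero, pow_zero, one_smul, Fin.val_succ,
    cons_comp_succAbove_succ, map_sum, Finsupp.smul_single]
  congr 1
  rw [Finset.smul_sum]
  apply Finset.sum_congr rfl
  intro i _
  rw [consMap_single, Finsupp.smul_single, smul_smul, ← pow_succ']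

noncomputable def B (V : Type) (ξ : ℂ) : (r p : ℕ) → Lam V (p + r) →ₗ[ℂ] Lam V p
  | 0, _ => LinearMap.id
  | r + 1, p => (B V ξ r p).comp (pbdry V ξ (p + r))

lemma B_zero (V : Type) (ξ : ℂ) (p : ℕ) : B V ξ 0 p = LinearMap.id := rfl

lemma B_succ (V : Type) (ξ : ℂ) (r p : ℕ) :
    B V ξ (r+1) p = (B V ξ r p).comp (pbdry V ξ (p + r)) := rfl

-- outer peeling: ∂ ∘ B r (m+1) = B (r+1) m ∘ cast
lemma B_outer (V : Type) (ξ : ℂ) (r m : ℕ) :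
    (pbdry V ξ m).comp (B V ξ r (m+1)) =
      (B V ξ (r+1) m).comp (lamCast V (show (m+1)+r = m+(r+1) by omega)).toLinearMap := by
  induction r with
  | zero =>
      simp [B_zero, B_succ, lamCast_rfl]
  | succ r ih =>
      rw [B_succ V ξ r (m+1), ← LinearMap.comp_assoc, ih, LinearMap.comp_assoc,
        ← pbdry_cast V ξ (show (m+1)+r = m+(r+1) by omega), ← LinearMap.comp_assoc,
        ← B_succ]

lemma key0 (V : Type) (ξ : ℂ) (r : ℕ) (v : V) :
    (B V ξ (r+1) 0).comp (consMap V v (0+r)) =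
      (∑ k ∈ Finset.range (r+1), ξ^k) • B V ξ r 0 := by
  induction r with
  | zero =>
      rw [B_succ]
      show (LinearMap.id.comp (pbdry V ξ 0)).comp (consMap V v 0) = _
      rw [LinearMap.id_comp, step0]
      simp [B_zero]
  | succ r ih =>
      rw [B_succ V ξ (r+1) 0, LinearMap.comp_assoc]
      rw [show pbdry V ξ (0 + (r+1)) = pbdry V ξ ((0+r)+1) from rfl,
        show consMap V v (0 + (r+1)) = consMap V v ((0+r)+1) from rfl,
        step V ξ (0+r) v]
      rw [LinearMap.comp_add, LinearMap.comp_id, LinearMap.comp_smul, ← LinearMap.comp_assoc, ih]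
      rw [LinearMap.smul_comp, ← B_succ, smul_smul, geom_sum_succ (x := ξ) (n := r+1)]
      module

lemma key (V : Type) (ξ : ℂ) (q r : ℕ) (v : V) :
    (B V ξ (r+1) (q+1)).comp (consMap V v ((q+1)+r)) =
      (∑ k ∈ Finset.range (r+1), ξ^k) • B V ξ r (q+1)
      + ξ^(r+1) • (consMap V v q).comp
          ((B V ξ (r+1) q).comp
            (lamCast V (show (q+1)+r = q+(r+1) by omega)).toLinearMap) := by
  induction r with
  | zero =>
      rw [B_succ]
      show (LinearMap.id.comp (pbdry V ξ (q+1))).comp (consMap V v (q+1)) = _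
      rw [LinearMap.id_comp, step, lamCast_rfl]
      rw [show B V ξ 1 q = LinearMap.id.comp (pbdry V ξ (q+0)) from rfl]
      simp [B_zero]
  | succ r ih =>
      rw [B_succ V ξ (r+1) (q+1), LinearMap.comp_assoc,
        show pbdry V ξ ((q+1) + (r+1)) = pbdry V ξ (((q+1)+r)+1) from rfl,
        show consMap V v ((q+1) + (r+1)) = consMap V v (((q+1)+r)+1) from rfl,
        step V ξ ((q+1)+r) v,
        LinearMap.comp_add, LinearMap.comp_id, LinearMap.comp_smul,
        ← LinearMap.comp_assoc, ih,
        LinearMap.add_comp, LinearMap.smul_comp, LinearMap.smul_comp,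
        LinearMap.comp_assoc, ← B_succ,
        LinearMap.comp_assoc _ _ (B V ξ (r+1) q),
        ← pbdry_cast V ξ (show (q+1)+r = q+(r+1) by omega),
        ← LinearMap.comp_assoc _ _ (B V ξ (r+1) q), ← B_succ,
        geom_sum_succ (x := ξ) (n := r+1)]
      rw [show (lamCast V (show ((q+1)+r)+1 = (q+(r+1))+1 by omega))
            = (lamCast V (show (q+1)+(r+1) = q+(r+2) by omega)) from rfl]
      module

lemma lamCast_trans' (V : Type) {a b c : ℕ} (h₁ : a = b) (h₂ : b = c)
    {M : Type} [AddCommMonoid M] [Module ℂ M] (F : M →ₗ[ℂ] Lam V a) :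
    (lamCast V h₂).toLinearMap.comp ((lamCast V h₁).toLinearMap.comp F)
      = (lamCast V (h₁.trans h₂)).toLinearMap.comp F := by
  rw [← LinearMap.comp_assoc, lamCast_trans]

lemma pbdry'_cast' (V : Type) (ξ : ℂ) {a b : ℕ} (h : a = b)
    {M : Type} [AddCommMonoid M] [Module ℂ M] (F : M →ₗ[ℂ] Lam V a) :
    (pbdry' V ξ b).comp ((lamCast V h).toLinearMap.comp F)
      = (lamCast V (show a - 1 = b - 1 by rw [h])).toLinearMap.comp ((pbdry' V ξ a).comp F) := by
  rw [← LinearMap.comp_assoc, pbdry'_cast, LinearMap.comp_assoc]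

lemma B_outer' (V : Type) (ξ : ℂ) (r m : ℕ)
    {M : Type} [AddCommMonoid M] [Module ℂ M] (F : M →ₗ[ℂ] Lam V ((m+1)+r)) :
    (pbdry V ξ m).comp ((B V ξ r (m+1)).comp F) =
      (B V ξ (r+1) m).comp
        ((lamCast V (show (m+1)+r = m+(r+1) by omega)).toLinearMap.comp F) := by
  rw [← LinearMap.comp_assoc, B_outer, LinearMap.comp_assoc]


lemma BN (V : Type) (N : ℕ) (hN : 2 ≤ N) (ξ : ℂ) (hξ : IsPrimitiveRoot ξ N) :
    ∀ q, B V ξ N q = 0 := by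
  obtain ⟨m, rfl⟩ : ∃ m, N = m + 1 := ⟨N - 1, by omega⟩
  have hgs : ∑ k ∈ Finset.range (m+1), ξ^k = 0 := hξ.geom_sum_eq_zero (by omega)
  intro q
  induction q with
  | zero =>
      apply Finsupp.lhom_ext
      intro f c
      have hf : Finsupp.single f c
          = consMap V (f (0 : Fin ((0+m)+1))) (0+m)
              (Finsupp.single (Fin.tail (α := fun _ => V) (n := 0+m) f) c) := by
        rw [consMap_single, Fin.cons_self_tail]
      rw [LinearMap.zero_apply, hf]
      have hc := LinearMap.congr_fun (key0 V ξ m (f (0 : Fin ((0+m)+1))))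
        (Finsupp.single (Fin.tail (α := fun _ => V) (n := 0+m) f) c)
      rw [LinearMap.comp_apply] at hc
      refine Eq.trans hc ?_
      rw [hgs]
      simp
  | succ q ih =>
      apply Finsupp.lhom_ext
      intro f c
      have hf : Finsupp.single f c
          = consMap V (f (0 : Fin (((q+1)+m)+1))) ((q+1)+m)
              (Finsupp.single (Fin.tail (α := fun _ => V) (n := (q+1)+m) f) c) := by
        rw [consMap_single, Fin.cons_self_tail]
      rw [LinearMap.zero_apply, hf]
      have hc := LinearMap.congr_fun (key V ξ q m (f (0 : Fin (((q+1)+m)+1))))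
        (Finsupp.single (Fin.tail (α := fun _ => V) (n := (q+1)+m) f) c)
      rw [LinearMap.comp_apply] at hc
      refine Eq.trans hc ?_
      rw [hgs, ih]
      simp

lemma pbdryIter_succ (V : Type) (ξ : ℂ) (r p : ℕ) :
    pbdryIter V ξ (r+1) p = (pbdry' V ξ (p - r)).comp (pbdryIter V ξ r p) := rfl

lemma bridge (V : Type) (ξ : ℂ) : ∀ (r m : ℕ),
    pbdryIter V ξ r (m + r)
      = (lamCast V (show m = m + r - r by omega)).toLinearMap.comp (B V ξ r m) := by
  intro r
  induction r with
  | zero =>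
      intro m
      show LinearMap.id = _
      rw [lamCast_rfl, B_zero]
      simp
  | succ r ih =>
      intro m
      rw [pbdryIter_succ,
        pbdryIter_cast V ξ r (show m + (r+1) = (m+1) + r by omega),
        ih (m+1)]
      simp only [LinearMap.comp_assoc]
      rw [lamCast_trans', pbdry'_cast' V ξ (show m + 1 = m + (r+1) - r by omega),
        show pbdry' V ξ (m+1) = pbdry V ξ m from rfl, B_outer',
        lamCast_trans, lamCast_rfl]
      simp

lemma lemA (V : Type) (ξ : ℂ) (r p : ℕ) (h : p ≤ r) : pbdryIter V ξ (r+1) p = 0 := by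
  have h0 : p - r = 0 := by omega
  have hz : pbdry' V ξ (p - r) = 0 := by rw [h0]; rfl
  rw [pbdryIter_succ, hz, LinearMap.zero_comp]


/-- Let `ξ` be a primitive `N`-th root of unity.  The `N`-fold composition
`∂^N` of the Mayer boundary on the spaces `Λ_*` of elementary paths is the
zero map; that is, `(Λ_*, ∂)` is an `N`-chain complex. -/
theorem mayer_boundary_pow_eq_zero (V : Type) (N : ℕ) (hN : 2 ≤ N) (ξ : ℂ)
    (hξ : IsPrimitiveRoot ξ N) (p : ℕ) :
    pbdryIter V ξ N p = 0 := by
  rcases le_or_gt N p with h | h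
  · have hp : p = (p - N) + N := by omega
    rw [hp, bridge, BN V N hN ξ hξ, LinearMap.comp_zero]
  · obtain ⟨m, rfl⟩ : ∃ m, N = m + 1 := ⟨N - 1, by omega⟩
    exact lemA V ξ m p (by omega)
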